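/- Let S be a commutative ring, n ≥ 2, and 1 ≤ i ≤ n−1. Then the ring homomorphism φ = (μ, μ_s) : A → R × R, defined on pure tensors by r1 ⊗ r2 ↦ (r1·r2, r1·s_i(r2)), is injective (the Goresky–Kottwitz–MacPherson map for the elementary Bott–Samelson bimodule). -/

import Mathlib

/- Common setup: substitution of multivariate power series, formal group laws,
formal inverses, and the variable–swapping operation. -/

open MvPowerSeries Finsupp

noncomputable section

variable {S : Type*} [CommRing S]

/-- Substitution of a family of multivariate power series (each intended to have zero
constant coefficient) into a power series in `k` variables.  When every `a j` has zero
constant coefficient, the coefficient of a monomial `m` of the substituted series only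
receives contributions from exponents `d` with `d j ≤ deg m`, so the finite sum below
computes the genuine substitution. -/
noncomputable def msubst {k n : ℕ} (a : Fin k → MvPowerSeries (Fin n) S)
    (F : MvPowerSeries (Fin k) S) : MvPowerSeries (Fin n) S :=
  fun m =>
    ∑ d ∈ Finset.Iic (equivFunOnFinite.symm fun _ : Fin k => m.sum fun _ e => e),
      MvPowerSeries.coeff (R := S) d F * MvPowerSeries.coeff (R := S) m (∏ j, a j ^ d j)

/-- `F ∈ S[[x,y]]` is a (one-dimensional, commutative) formal group law over `S`:
zero constant coefficient, commutativity `F(x,y) = F(y,x)`, unitality `F(x,0) = x`,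
and associativity `F(F(x,y),z) = F(x,F(y,z))`. -/
def IsFormalGroupLaw (F : MvPowerSeries (Fin 2) S) : Prop :=
  MvPowerSeries.constantCoeff (σ := Fin 2) (R := S) F = 0 ∧
  msubst ![(X 1 : MvPowerSeries (Fin 2) S), X 0] F = F ∧
  msubst ![(X 0 : MvPowerSeries (Fin 2) S), 0] F = X 0 ∧
  msubst ![msubst ![(X 0 : MvPowerSeries (Fin 3) S), X 1] F, X 2] F
    = msubst ![(X 0 : MvPowerSeries (Fin 3) S), msubst ![(X 1 : MvPowerSeries (Fin 3) S), X 2] F] F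

/-- `ι ∈ S[[x]]` is the formal inverse of `F`: it has zero constant coefficient
and `F(x, ι(x)) = 0`. -/
def IsFormalInverse (F : MvPowerSeries (Fin 2) S) (ι : MvPowerSeries (Fin 1) S) : Prop :=
  MvPowerSeries.constantCoeff (σ := Fin 1) (R := S) ι = 0 ∧
  msubst ![(X 0 : MvPowerSeries (Fin 1) S), ι] F = 0

/-- `ι(b)`, the substitution of `b` into the formal inverse `ι`. -/
noncomputable def fneg (ι : MvPowerSeries (Fin 1) S) {n : ℕ}
    (b : MvPowerSeries (Fin n) S) : MvPowerSeries (Fin n) S :=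
  msubst ![b] ι

/-- `a −_F b := F(a, ι(b))`. -/
noncomputable def fsub (F : MvPowerSeries (Fin 2) S) (ι : MvPowerSeries (Fin 1) S) {n : ℕ}
    (a b : MvPowerSeries (Fin n) S) : MvPowerSeries (Fin n) S :=
  msubst ![a, fneg ι b] F

/-- Substitution `g(a,b)` of two power series into a two-variable power series `g`. -/
noncomputable def gsub (g : MvPowerSeries (Fin 2) S) {n : ℕ}
    (a b : MvPowerSeries (Fin n) S) : MvPowerSeries (Fin n) S :=
  msubst ![a, b] g

/-- The map on multivariate power series interchanging the variables `x_i` and `x_j`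
(the renaming along the transposition `(i,j)`). -/
def swapVars {n : ℕ} (i j : Fin n) (f : MvPowerSeries (Fin n) S) :
    MvPowerSeries (Fin n) S :=
  fun m => f (equivMapDomain (Equiv.swap i j) m)

theorem swapVars_coeff {n : ℕ} (i j : Fin n) (f : MvPowerSeries (Fin n) S) (m : Fin n →₀ ℕ) :
    MvPowerSeries.coeff (R := S) m (swapVars i j f)
      = MvPowerSeries.coeff (R := S) (equivMapDomain (Equiv.swap i j) m) f := rfl

theorem equivMapDomain_swap_invol {n : ℕ} (i j : Fin n) (m : Fin n →₀ ℕ) :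
    equivMapDomain (Equiv.swap i j) (equivMapDomain (Equiv.swap i j) m) = m := by
  rw [← equivMapDomain_trans, Equiv.swap_swap, equivMapDomain_refl]

theorem equivMapDomain_add' {n : ℕ} (e : Fin n ≃ Fin n) (a b : Fin n →₀ ℕ) :
    equivMapDomain e (a + b) = equivMapDomain e a + equivMapDomain e b := by
  ext x; simp [equivMapDomain_apply]

theorem swapVars_add {n : ℕ} (i j : Fin n) (f h : MvPowerSeries (Fin n) S) :
    swapVars i j (f + h) = swapVars i j f + swapVars i j h := rfl

theorem swapVars_mul {n : ℕ} (i j : Fin n) (f h : MvPowerSeries (Fin n) S) :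
    swapVars i j (f * h) = swapVars i j f * swapVars i j h := by
  ext m
  rw [swapVars_coeff, MvPowerSeries.coeff_mul, MvPowerSeries.coeff_mul]
  refine Finset.sum_nbij'
    (fun p => (equivMapDomain (Equiv.swap i j) p.1, equivMapDomain (Equiv.swap i j) p.2))
    (fun p => (equivMapDomain (Equiv.swap i j) p.1, equivMapDomain (Equiv.swap i j) p.2))
    ?_ ?_ ?_ ?_ ?_
  · intro p hp
    rw [Finset.HasAntidiagonal.mem_antidiagonal] at hp ⊢
    rw [← equivMapDomain_add', hp, equivMapDomain_swap_invol]
  · intro p hp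
    rw [Finset.HasAntidiagonal.mem_antidiagonal] at hp ⊢
    rw [← equivMapDomain_add', hp]
  · intro p _; simp [equivMapDomain_swap_invol]
  · intro p _; simp [equivMapDomain_swap_invol]
  · intro p _
    rw [swapVars_coeff, swapVars_coeff, equivMapDomain_swap_invol, equivMapDomain_swap_invol]

theorem swapVars_C {n : ℕ} (i j : Fin n) (s : S) :
    swapVars i j (MvPowerSeries.C (σ := Fin n) (R := S) s) = MvPowerSeries.C (σ := Fin n) (R := S) s := by
  ext m
  rw [swapVars_coeff, MvPowerSeries.coeff_C, MvPowerSeries.coeff_C]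
  by_cases hm : m = 0
  · subst hm; rw [equivMapDomain_zero]
  · rw [if_neg, if_neg hm]
    intro hc
    apply hm
    have := congrArg (equivMapDomain (Equiv.swap i j)) hc
    rwa [equivMapDomain_swap_invol, equivMapDomain_zero] at this

theorem swapVars_one {n : ℕ} (i j : Fin n) :
    swapVars i j (1 : MvPowerSeries (Fin n) S) = 1 := by
  have := swapVars_C (S := S) i j 1
  rwa [map_one] at this

/-- The fixed subalgebra `R^{s_i}` of power series invariant under interchanging
the variables `x_i` and `x_j`. -/
noncomputable def fixedSubalgebra (S : Type*) [CommRing S] {n : ℕ} (i j : Fin n) :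
    Subalgebra S (MvPowerSeries (Fin n) S) where
  carrier := {f | swapVars i j f = f}
  mul_mem' := by
    intro a b ha hb
    simp only [Set.mem_setOf_eq] at *
    rw [swapVars_mul, ha, hb]
  add_mem' := by
    intro a b ha hb
    simp only [Set.mem_setOf_eq] at *
    rw [swapVars_add, ha, hb]
  algebraMap_mem' := fun s => swapVars_C i j s

/-- `s_i` as an algebra homomorphism over the fixed subalgebra. -/
noncomputable def swapAlgHom (S : Type*) [CommRing S] {n : ℕ} (i j : Fin n) :
    MvPowerSeries (Fin n) S →ₐ[fixedSubalgebra S i j] MvPowerSeries (Fin n) S where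
  toFun := swapVars i j
  map_one' := swapVars_one i j
  map_mul' := swapVars_mul i j
  map_zero' := rfl
  map_add' := swapVars_add i j
  commutes' := fun r => r.2

open TensorProduct in
/-- The elementary Bott–Samelson bimodule `A = R ⊗_{R^{s_i}} R`. -/
noncomputable abbrev BSB (S : Type*) [CommRing S] {n : ℕ} (i j : Fin n) : Type _ :=
  (MvPowerSeries (Fin n) S) ⊗[fixedSubalgebra S i j] (MvPowerSeries (Fin n) S)

/-- The multiplication map `μ : A → R`, `r1 ⊗ r2 ↦ r1·r2`. -/
noncomputable def mulHom (S : Type*) [CommRing S] {n : ℕ} (i j : Fin n) :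
    BSB S i j →ₐ[fixedSubalgebra S i j] MvPowerSeries (Fin n) S :=
  Algebra.TensorProduct.productMap (AlgHom.id _ _) (AlgHom.id _ _)

/-- The twisted multiplication map `μ_s : A → R`, `r1 ⊗ r2 ↦ r1·s_i(r2)`. -/
noncomputable def mulsHom (S : Type*) [CommRing S] {n : ℕ} (i j : Fin n) :
    BSB S i j →ₐ[fixedSubalgebra S i j] MvPowerSeries (Fin n) S :=
  Algebra.TensorProduct.productMap (AlgHom.id _ _) (swapAlgHom S i j)

open TensorProduct in
/-- The element `ξ = x_i⊗1 −_F 1⊗x_{i+1} := (g(x_i,x_j)⁻¹ ⊗ 1)·(1 ⊗ x_i − x_j ⊗ 1)` of `A`. -/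
noncomputable def xiElt (g : MvPowerSeries (Fin 2) S) {n : ℕ} (i j : Fin n) : BSB S i j :=
  (Ring.inverse (gsub g (X i) (X j)) ⊗ₜ[fixedSubalgebra S i j] (1 : MvPowerSeries (Fin n) S)) *
    ((1 : MvPowerSeries (Fin n) S) ⊗ₜ[fixedSubalgebra S i j] (X i)
      - (X j) ⊗ₜ[fixedSubalgebra S i j] (1 : MvPowerSeries (Fin n) S))

open TensorProduct in
/-- The element `ξ' = x_{i+1}⊗1 −_F 1⊗x_{i+1} := (g(x_j,x_i)⁻¹ ⊗ 1)·(1 ⊗ x_i − x_i ⊗ 1)` of `A`. -/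
noncomputable def xiElt' (g : MvPowerSeries (Fin 2) S) {n : ℕ} (i j : Fin n) : BSB S i j :=
  (Ring.inverse (gsub g (X j) (X i)) ⊗ₜ[fixedSubalgebra S i j] (1 : MvPowerSeries (Fin n) S)) *
    ((1 : MvPowerSeries (Fin n) S) ⊗ₜ[fixedSubalgebra S i j] (X i)
      - (X i) ⊗ₜ[fixedSubalgebra S i j] (1 : MvPowerSeries (Fin n) S))

/- `R = R^{s} + R^{s} x_i`: since `f` and `s f` agree after setting
`x_i := x_j`, and `f - f(x_i := x_j) = (x_i - x_j) · diffQuot f`, the difference `f - s f` is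
`(x_i - x_j) c` with `c` symmetric (because `x_i - x_j` is a non-zero-divisor: `diffQuot` undoes
multiplication by it), so `f = (f - c x_i) + c x_i`. Hence every element of `A` is
`p ⊗ 1 + q ⊗ x_i`, with images `p + q x_i` and `p + q x_j`; if both vanish, `(x_i - x_j) q = 0`
gives `q = 0` and then `p = 0`. -/

section DividedDifference

variable {σ : Type*} {i j : σ}

def updatePair (m : σ →₀ ℕ) (i j : σ) (a b : ℕ) : σ →₀ ℕ :=
  (m.update i a).update j b

def antidiagCoeffSum (i j : σ) (f : MvPowerSeries σ S) (m : σ →₀ ℕ) (a c : ℕ) : S :=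
  ∑ p ∈ Finset.HasAntidiagonal.antidiagonal c, coeff (updatePair m i j (a + p.1) p.2) f

theorem antidiagCoeffSum_zero (f : MvPowerSeries σ S) (m : σ →₀ ℕ) (a : ℕ) :
    antidiagCoeffSum i j f m a 0 = coeff (updatePair m i j a 0) f := by
  simp [antidiagCoeffSum]

theorem antidiagCoeffSum_succ (f : MvPowerSeries σ S) (m : σ →₀ ℕ) (a c : ℕ) :
    antidiagCoeffSum i j f m a (c + 1)
      = coeff (updatePair m i j a (c + 1)) f + antidiagCoeffSum i j f m (a + 1) c := by
  simp only [antidiagCoeffSum, Finset.Nat.sum_antidiagonal_succ, add_zero, add_right_comm,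
    add_assoc]

variable [DecidableEq σ]

theorem updatePair_apply (m : σ →₀ ℕ) (a b : ℕ) (k : σ) :
    updatePair m i j a b k = if k = j then b else if k = i then a else m k := by
  simp [updatePair, Finsupp.update_apply]

theorem updatePair_self (m : σ →₀ ℕ) : updatePair m i j (m i) (m j) = m := by
  ext k
  rw [updatePair_apply]
  split_ifs <;> simp_all

theorem updatePair_updatePair (m : σ →₀ ℕ) (a b c d : ℕ) :
    updatePair (updatePair m i j a b) i j c d = updatePair m i j c d := by
  ext k
  simp only [updatePair_apply]
  split_ifs <;> rfl

theorem updatePair_apply_left (hij : i ≠ j) (m : σ →₀ ℕ) (a b : ℕ) :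
    updatePair m i j a b i = a := by
  simp [updatePair_apply, hij]

theorem updatePair_apply_right (m : σ →₀ ℕ) (a b : ℕ) : updatePair m i j a b j = b := by
  simp [updatePair_apply]

theorem updatePair_succ_left (hij : i ≠ j) (m : σ →₀ ℕ) (a b : ℕ) :
    updatePair m i j (a + 1) b = single i 1 + updatePair m i j a b := by
  ext k
  simp only [updatePair_apply, Finsupp.add_apply, Finsupp.single_apply]
  split_ifs <;> subst_vars <;> first | omega | exact absurd rfl ‹_›

theorem updatePair_succ_right (m : σ →₀ ℕ) (a b : ℕ) :
    updatePair m i j a (b + 1) = single j 1 + updatePair m i j a b := by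
  ext k
  simp only [updatePair_apply, Finsupp.add_apply, Finsupp.single_apply]
  split_ifs <;> subst_vars <;> first | omega | exact absurd rfl ‹_›

theorem ext_updatePair (i j : σ) {f g : MvPowerSeries σ S}
    (h : ∀ m a b, coeff (updatePair m i j a b) f = coeff (updatePair m i j a b) g) : f = g := by
  ext m
  rw [← updatePair_self (i := i) (j := j) m]
  exact h m _ _

theorem coeff_updatePair_succ_left_X_mul (hij : i ≠ j) (m : σ →₀ ℕ) (a b : ℕ)
    (g : MvPowerSeries σ S) :
    coeff (updatePair m i j (a + 1) b) (X i * g) = coeff (updatePair m i j a b) g := by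
  rw [updatePair_succ_left hij, X, coeff_add_monomial_mul, one_mul]

theorem coeff_updatePair_succ_right_X_mul (m : σ →₀ ℕ) (a b : ℕ) (g : MvPowerSeries σ S) :
    coeff (updatePair m i j a (b + 1)) (X j * g) = coeff (updatePair m i j a b) g := by
  rw [updatePair_succ_right, X, coeff_add_monomial_mul, one_mul]

theorem coeff_updatePair_zero_left_X_mul (hij : i ≠ j) (m : σ →₀ ℕ) (b : ℕ)
    (g : MvPowerSeries σ S) : coeff (updatePair m i j 0 b) (X i * g) = 0 := by
  rw [X, coeff_monomial_mul, if_neg]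
  simp [Finsupp.single_le_iff, updatePair_apply_left hij]

theorem coeff_updatePair_zero_right_X_mul (m : σ →₀ ℕ) (a : ℕ) (g : MvPowerSeries σ S) :
    coeff (updatePair m i j a 0) (X j * g) = 0 := by
  rw [X, coeff_monomial_mul, if_neg]
  simp [Finsupp.single_le_iff, updatePair_apply_right]

theorem antidiagCoeffSum_updatePair (f : MvPowerSeries σ S) (m : σ →₀ ℕ) (a b x c : ℕ) :
    antidiagCoeffSum i j f (updatePair m i j a b) x c = antidiagCoeffSum i j f m x c := by
  simp only [antidiagCoeffSum, updatePair_updatePair]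

/-- `f(x_i := x_j)`: the coefficient of `x_j^c` collects those of `x_i^a x_j^b`, `a + b = c`. -/
def evalDiag (i j : σ) (f : MvPowerSeries σ S) : MvPowerSeries σ S :=
  fun m => if m i = 0 then antidiagCoeffSum i j f m 0 (m j) else 0

def diffQuot (i j : σ) (f : MvPowerSeries σ S) : MvPowerSeries σ S :=
  fun m => antidiagCoeffSum i j f m (m i + 1) (m j)

theorem coeff_updatePair_evalDiag (hij : i ≠ j) (f : MvPowerSeries σ S) (m : σ →₀ ℕ)
    (a b : ℕ) :
    coeff (updatePair m i j a b) (evalDiag i j f)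
      = if a = 0 then antidiagCoeffSum i j f m 0 b else 0 := by
  simp only [evalDiag, coeff_apply, updatePair_apply_left hij, updatePair_apply_right,
    antidiagCoeffSum_updatePair]

theorem coeff_updatePair_diffQuot (hij : i ≠ j) (f : MvPowerSeries σ S) (m : σ →₀ ℕ)
    (a b : ℕ) :
    coeff (updatePair m i j a b) (diffQuot i j f) = antidiagCoeffSum i j f m (a + 1) b := by
  simp only [diffQuot, coeff_apply, updatePair_apply_left hij, updatePair_apply_right,
    antidiagCoeffSum_updatePair]

theorem X_sub_X_mul_diffQuot (hij : i ≠ j) (f : MvPowerSeries σ S) :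
    (X i - X j) * diffQuot i j f = f - evalDiag i j f := by
  refine ext_updatePair i j fun m a b => ?_
  rw [sub_mul, map_sub, map_sub, coeff_updatePair_evalDiag hij]
  rcases a with _ | a <;> rcases b with _ | b
  · simp [coeff_updatePair_zero_left_X_mul hij, coeff_updatePair_zero_right_X_mul,
      antidiagCoeffSum_zero]
  · simp [coeff_updatePair_zero_left_X_mul hij, coeff_updatePair_succ_right_X_mul,
      coeff_updatePair_diffQuot hij, antidiagCoeffSum_succ]
  · simp [coeff_updatePair_succ_left_X_mul hij, coeff_updatePair_zero_right_X_mul,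
      coeff_updatePair_diffQuot hij, antidiagCoeffSum_zero]
  · simp [coeff_updatePair_succ_left_X_mul hij, coeff_updatePair_succ_right_X_mul,
      coeff_updatePair_diffQuot hij, antidiagCoeffSum_succ]

theorem diffQuot_X_sub_X_mul (hij : i ≠ j) (q : MvPowerSeries σ S) :
    diffQuot i j ((X i - X j) * q) = q := by
  have key : ∀ b a m, antidiagCoeffSum i j ((X i - X j) * q) m (a + 1) b
      = coeff (updatePair m i j a b) q := by
    intro b
    induction b with
    | zero => simp [antidiagCoeffSum_zero, sub_mul, coeff_updatePair_succ_left_X_mul hij,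
        coeff_updatePair_zero_right_X_mul]
    | succ b ih =>
      intro a m
      rw [antidiagCoeffSum_succ, ih, sub_mul, map_sub, coeff_updatePair_succ_left_X_mul hij,
        coeff_updatePair_succ_right_X_mul, sub_add_cancel]
  exact ext_updatePair i j fun m a b => by rw [coeff_updatePair_diffQuot hij, key]

theorem isLeftRegular_X_sub_X (hij : i ≠ j) : IsLeftRegular (X i - X j : MvPowerSeries σ S) :=
  fun p q h => by
    simpa only [diffQuot_X_sub_X_mul hij] using congrArg (diffQuot i j) h

end DividedDifference

section SwapVars

variable {n : ℕ} {i j : Fin n}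

theorem mem_fixedSubalgebra {f : MvPowerSeries (Fin n) S} :
    f ∈ fixedSubalgebra S i j ↔ swapVars i j f = f := Iff.rfl

theorem swapVars_swapVars (f : MvPowerSeries (Fin n) S) : swapVars i j (swapVars i j f) = f := by
  ext m
  rw [swapVars_coeff, swapVars_coeff, equivMapDomain_swap_invol]

theorem swapVars_sub (f h : MvPowerSeries (Fin n) S) :
    swapVars i j (f - h) = swapVars i j f - swapVars i j h :=
  map_sub (swapAlgHom S i j) f h

theorem swapVars_X (k : Fin n) :
    swapVars i j (X k : MvPowerSeries (Fin n) S) = X (Equiv.swap i j k) := by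
  ext m
  have hk : single k 1 = equivMapDomain (Equiv.swap i j) (single (Equiv.swap i j k) 1) := by
    rw [equivMapDomain_single, Equiv.swap_apply_self]
  simp only [swapVars_coeff, coeff_X, hk,
    Function.LeftInverse.injective (equivMapDomain_swap_invol i j) |>.eq_iff]

theorem equivMapDomain_swap_updatePair (hij : i ≠ j) (m : Fin n →₀ ℕ) (a b : ℕ) :
    equivMapDomain (Equiv.swap i j) (updatePair m i j a b) = updatePair m i j b a := by
  ext k
  simp only [equivMapDomain_apply, Equiv.symm_swap, updatePair_apply]
  by_cases hki : k = i
  · subst hki; simp [hij]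
  by_cases hkj : k = j
  · subst hkj; simp [hij]
  · simp [Equiv.swap_apply_of_ne_of_ne hki hkj, hki, hkj]

theorem evalDiag_swapVars (hij : i ≠ j) (f : MvPowerSeries (Fin n) S) :
    evalDiag i j (swapVars i j f) = evalDiag i j f := by
  ext m
  simp only [evalDiag, coeff_apply]
  split_ifs
  · rw [antidiagCoeffSum, antidiagCoeffSum, ← Finset.Nat.sum_antidiagonal_swap]
    simp only [swapVars_coeff, equivMapDomain_swap_updatePair hij, Prod.fst_swap, Prod.snd_swap,
      zero_add]
  · rfl

theorem X_sub_X_dvd_sub_swapVars (hij : i ≠ j) (f : MvPowerSeries (Fin n) S) :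
    X i - X j ∣ f - swapVars i j f :=
  ⟨diffQuot i j f - diffQuot i j (swapVars i j f), by
    rw [mul_sub, X_sub_X_mul_diffQuot hij, X_sub_X_mul_diffQuot hij, evalDiag_swapVars hij]
    ring⟩

theorem exists_fixed_add_fixed_mul_X (hij : i ≠ j) (f : MvPowerSeries (Fin n) S) :
    ∃ a ∈ fixedSubalgebra S i j, ∃ b ∈ fixedSubalgebra S i j, f = a + b * X i := by
  obtain ⟨c, hc⟩ := X_sub_X_dvd_sub_swapVars hij f
  have hsc : swapVars i j c = c := by
    apply isLeftRegular_X_sub_X hij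
    have := congrArg (swapVars i j) hc
    rw [swapVars_sub, swapVars_swapVars, swapVars_mul, swapVars_sub, swapVars_X, swapVars_X,
      Equiv.swap_apply_left, Equiv.swap_apply_right] at this
    linear_combination this + hc
  refine ⟨f - c * X i, ?_, c, hsc, by ring⟩
  rw [mem_fixedSubalgebra, swapVars_sub, swapVars_mul, hsc, swapVars_X, Equiv.swap_apply_left]
  linear_combination -hc

end SwapVars

section BottSamelson

open TensorProduct

variable {n : ℕ} {i j : Fin n}

theorem tmul_mul_of_mem_fixedSubalgebra (r x : MvPowerSeries (Fin n) S)
    {c : MvPowerSeries (Fin n) S} (hc : c ∈ fixedSubalgebra S i j) :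
    r ⊗ₜ[fixedSubalgebra S i j] (c * x) = (r * c) ⊗ₜ[fixedSubalgebra S i j] x := by
  have hsmul : ∀ y, (⟨c, hc⟩ : fixedSubalgebra S i j) • y = c * y := fun _ => rfl
  rw [← hsmul, tmul_smul, smul_tmul', hsmul, mul_comm]

theorem exists_eq_tmul_one_add_tmul_X (hij : i ≠ j) (z : BSB S i j) :
    ∃ p q : MvPowerSeries (Fin n) S,
      z = p ⊗ₜ[fixedSubalgebra S i j] 1 + q ⊗ₜ[fixedSubalgebra S i j] X i := by
  induction z using TensorProduct.induction_on with
  | zero => exact ⟨0, 0, by simp⟩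
  | tmul r f =>
    obtain ⟨a, ha, b, hb, rfl⟩ := exists_fixed_add_fixed_mul_X hij f
    refine ⟨r * a, r * b, ?_⟩
    rw [tmul_add, ← tmul_mul_of_mem_fixedSubalgebra r 1 ha, mul_one,
      tmul_mul_of_mem_fixedSubalgebra r _ hb]
  | add z₁ z₂ ih₁ ih₂ =>
    obtain ⟨p₁, q₁, rfl⟩ := ih₁
    obtain ⟨p₂, q₂, rfl⟩ := ih₂
    exact ⟨p₁ + p₂, q₁ + q₂, by rw [add_tmul, add_tmul]; abel⟩

theorem mulHom_tmul (r f : MvPowerSeries (Fin n) S) :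
    mulHom S i j (r ⊗ₜ f) = r * f := rfl

theorem mulsHom_tmul (r f : MvPowerSeries (Fin n) S) :
    mulsHom S i j (r ⊗ₜ f) = r * swapVars i j f := rfl

end BottSamelson

/-- the combined (GKM) map `(μ, μ_s) : R ⊗_{R^{s_i}} R → R × R`,
`r1 ⊗ r2 ↦ (r1·r2, r1·s_i(r2))`, is injective. -/
theorem gkm_injective
    {n : ℕ} (i j : Fin n) (hij : (i : ℕ) + 1 = (j : ℕ)) :
    Function.Injective (fun a : BSB S i j => (mulHom S i j a, mulsHom S i j a)) := by
  have hne : i ≠ j := Fin.ne_of_val_ne (by omega)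
  change Function.Injective ((mulHom S i j).prod (mulsHom S i j))
  refine (injective_iff_map_eq_zero _).2 fun z hz => ?_
  obtain ⟨p, q, rfl⟩ := exists_eq_tmul_one_add_tmul_X hne z
  simp only [AlgHom.prod_apply, map_add, mulHom_tmul, mulsHom_tmul, swapVars_one,
    swapVars_X, Equiv.swap_apply_left, mul_one, Prod.mk_add_mk, Prod.mk_eq_zero] at hz
  have hq : q = 0 := isLeftRegular_X_sub_X hne <| by linear_combination hz.1 - hz.2
  obtain rfl : p = 0 := by simpa [hq] using hz.1
  simp [hq]

end
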